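/- For the ground completion of a disjunctive normal program P and any interpretation M: M is a model of comp(P) if and only if T3+_P(M) = M and T3-_P(M) = M. -/
import Mathlib

open Classical

/-- The three truth values: true, false, inadmissible. -/
inductive TV : Type where
  | t : TV
  | f : TV
  | i : TV
deriving DecidableEq

/-- Kleene strong three-valued negation. -/
def TV.not : TV → TV
  | .t => .f
  | .f => .t
  | .i => .i

/-- Kleene strong three-valued conjunction. -/
def TV.and : TV → TV → TV
  | .t, .t => .t
  | .f, _ => .f
  | _, .f => .f
  | _, _ => .i

/-- Kleene strong three-valued disjunction. -/
def TV.or : TV → TV → TV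
  | .f, .f => .f
  | .t, _ => .t
  | _, .t => .t
  | _, _ => .i

/-- Ground normal body formulas over a set `α` of ground atoms: built from
atoms and negations of atoms using binary conjunction and disjunction. -/
inductive NBody (α : Type*) : Type _ where
  | pos : α → NBody α
  | neg : α → NBody α
  | conj : NBody α → NBody α → NBody α
  | disj : NBody α → NBody α → NBody α

variable {α : Type*}

/-- Kleene strong three-valued evaluation of a normal body formula in the
interpretation `M : α → TV`. -/
def neval (M : α → TV) : NBody α → TV
  | .pos a => M a
  | .neg a => TV.not (M a)
  | .conj b c => TV.and (neval M b) (neval M c)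
  | .disj b c => TV.or (neval M b) (neval M c)

/-- The ground completion of a disjunctive normal program: for each atom `A`,
the set `Bodies_P(A)` of ground normal body formulas. -/
abbrev Completion (α : Type*) := α → Set (NBody α)

/-- The operator `T3_P`: an atom `A` is true if some `B ∈ Bodies_P(A)` is T in
`M`, false if every `B ∈ Bodies_P(A)` is F in `M`, and inadmissible
otherwise. -/
noncomputable def T3op (Bo : Completion α) (M : α → TV) : α → TV := fun a =>
  if ∃ B ∈ Bo a, neval M B = TV.t then TV.t
  else if ∀ B ∈ Bo a, neval M B = TV.f then TV.f
  else TV.i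

/-- The operator `T3⁺_P`: an atom `A` is inadmissible if `A` is inadmissible
in `M`, true if `A` is admissible in `M` and some `B ∈ Bodies_P(A)` is T or I
in `M`, and false otherwise. -/
noncomputable def T3plus (Bo : Completion α) (M : α → TV) : α → TV := fun a =>
  if M a = TV.i then TV.i
  else if ∃ B ∈ Bo a, neval M B ≠ TV.f then TV.t
  else TV.f

/-- The operator `T3⁻_P`: an atom `A` is inadmissible if `A` is inadmissible
in `M`, true if some `B ∈ Bodies_P(A)` is T in `M`, and false otherwise. -/
noncomputable def T3minus (Bo : Completion α) (M : α → TV) : α → TV := fun a =>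
  if M a = TV.i then TV.i
  else if ∃ B ∈ Bo a, neval M B = TV.t then TV.t
  else TV.f

/-- `M` is a model of `comp(P)`: for every atom `A`, if `A` is T in `M` then
some `B ∈ Bodies_P(A)` is T in `M`, and if `A` is F in `M` then every
`B ∈ Bodies_P(A)` is F in `M`. -/
def IsCompModel (Bo : Completion α) (M : α → TV) : Prop :=
  ∀ a : α,
    (M a = TV.t → ∃ B ∈ Bo a, neval M B = TV.t) ∧
    (M a = TV.f → ∀ B ∈ Bo a, neval M B = TV.f)

/-- `M` is a model of `comp(P)` iff `T3⁺_P(M) = M` and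
`T3⁻_P(M) = M`. -/
theorem compModel_iff_T3plus_T3minus_fixpoint {α : Type*} (Bo : Completion α)
    (M : α → TV) :
    IsCompModel Bo M ↔ (T3plus Bo M = M ∧ T3minus Bo M = M) := by
  constructor
  · intro h
    constructor
    · funext a
      obtain ⟨ht, hf⟩ := h a
      cases hMa : M a with
      | i => simp [T3plus, hMa]
      | t =>
        simp only [T3plus, hMa]
        rw [if_neg (by simp), if_pos]
        obtain ⟨B, hB, hBt⟩ := ht hMa
        exact ⟨B, hB, by simp [hBt]⟩
      | f =>
        simp only [T3plus, hMa]
        rw [if_neg (by simp), if_neg]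
        rintro ⟨B, hB, hBf⟩
        exact hBf (hf hMa B hB)
    · funext a
      obtain ⟨ht, hf⟩ := h a
      cases hMa : M a with
      | i => simp [T3minus, hMa]
      | t =>
        simp only [T3minus, hMa]
        rw [if_neg (by simp), if_pos (ht hMa)]
      | f =>
        simp only [T3minus, hMa]
        rw [if_neg (by simp), if_neg]
        rintro ⟨B, hB, hBt⟩
        exact absurd (hf hMa B hB) (by simp [hBt])
  · rintro ⟨hp, hm⟩ a
    constructor
    · intro ht
      have := congrFun hm a
      unfold T3minus at this
      rw [ht] at this
      rw [if_neg (by simp)] at this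
      by_contra hc
      rw [if_neg hc] at this
      exact absurd this (by simp)
    · intro hf
      intro B hB
      have := congrFun hp a
      unfold T3plus at this
      rw [hf] at this
      rw [if_neg (by simp)] at this
      by_contra hc
      rw [if_pos ⟨B, hB, hc⟩] at this
      exact absurd this (by simp)
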